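/- Let n ≥ 1, k ≥ 2, p ≥ 1. For j = 1,…,p let c_j ∈ ℝ with c_j < 0 and b_j ∈ ℝⁿ, let L : ℝᵏ → ℝⁿ be linear, and for v ∈ S^{k−1} define d_j(v) := ⟨b_j, Lv⟩ and ρ_j(v) := −c_j/d_j(v) if d_j(v) > 0 and ρ_j(v) := ∞ otherwise, and ρ(v) := min_{1≤j≤p} ρ_j(v). Let σ be the uniform probability measure on S^{k−1}. If for all i ≠ j the vectors Lᵀb_i and Lᵀb_j in ℝᵏ are linearly independent, then σ({ v ∈ S^{k−1} : ρ(v) < ∞ and there exist i ≠ j with ρ(v) = ρ_i(v) = ρ_j(v) }) = 0; that is, for σ-almost every direction v with ρ(v) < ∞, the minimum defining ρ(v) is attained by exactly one index. -/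

import Mathlib

open MeasureTheory Metric Pointwise
open scoped RealInnerProductSpace ENNReal

/-- The uniform probability measure on the unit sphere `S^{k-1} ⊆ ℝᵏ`: the normalized
cone (surface) measure obtained from Lebesgue measure on Euclidean space. -/
noncomputable def uniformSphereMeasure (k : ℕ) :
    Measure (sphere (0 : EuclideanSpace ℝ (Fin k)) 1) :=
  ((volume : Measure (EuclideanSpace ℝ (Fin k))).toSphere Set.univ)⁻¹ •
    (volume : Measure (EuclideanSpace ℝ (Fin k))).toSphere

/-- A hyperplane slice of the sphere has zero uniform measure. -/
lemma sphere_hyperplane_null {k : ℕ} (w : EuclideanSpace ℝ (Fin k)) (hw : w ≠ 0) :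
    uniformSphereMeasure k
      {v : sphere (0 : EuclideanSpace ℝ (Fin k)) 1 |
        ⟪w, (v : EuclideanSpace ℝ (Fin k))⟫ = 0} = 0 := by
  set S : Set (sphere (0 : EuclideanSpace ℝ (Fin k)) 1) :=
    {v | ⟪w, (v : EuclideanSpace ℝ (Fin k))⟫ = 0} with hS
  have hcont : Continuous fun v : sphere (0 : EuclideanSpace ℝ (Fin k)) 1 =>
      ⟪w, (v : EuclideanSpace ℝ (Fin k))⟫ :=
    continuous_const.inner continuous_subtype_val
  have hmeas : MeasurableSet S :=
    (measurableSet_singleton (0 : ℝ)).preimage hcont.measurable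
  have hK : LinearMap.ker ((innerSL ℝ) w).toLinearMap ≠ ⊤ := by
    intro h
    have hw0 : w ∈ LinearMap.ker ((innerSL ℝ) w).toLinearMap := h ▸ Submodule.mem_top
    have : ⟪w, w⟫ = 0 := hw0
    exact hw (inner_self_eq_zero.mp this)
  have hvol : (volume : Measure (EuclideanSpace ℝ (Fin k)))
      (Set.Ioo (0:ℝ) 1 • (Subtype.val '' S)) = 0 := by
    refine measure_mono_null ?_
      (Measure.addHaar_submodule volume (LinearMap.ker ((innerSL ℝ) w).toLinearMap) hK)
    rintro x ⟨r, hr, y, ⟨v, hv, rfl⟩, rfl⟩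
    have hv' : ⟪w, (v : EuclideanSpace ℝ (Fin k))⟫ = 0 := hv
    show ⟪w, r • (v : EuclideanSpace ℝ (Fin k))⟫ = 0
    rw [real_inner_smul_right, hv', mul_zero]
  have htoS : (volume : Measure (EuclideanSpace ℝ (Fin k))).toSphere S = 0 := by
    rw [Measure.toSphere_apply' _ hmeas, hvol, mul_zero]
  rw [uniformSphereMeasure, Measure.smul_apply, htoS, smul_zero]

/-- under the rank-2 constraint qualification (pairwise linear independence
of the vectors `Lᵀ bᵢ`), for `σ`-almost every direction `v` on the sphere with finite
radial value `ρ(v)`, the minimum defining `ρ(v) = min_j ρ_j(v)` is attained by exactly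
one index (the exceptional set has `σ`-measure zero). -/
theorem active_index_unique_ae
    {n k p : ℕ} (hn : 1 ≤ n) (hk : 2 ≤ k) (hp : 1 ≤ p)
    (c : Fin p → ℝ) (hc : ∀ j, c j < 0)
    (b : Fin p → EuclideanSpace ℝ (Fin n))
    (L : EuclideanSpace ℝ (Fin k) →ₗ[ℝ] EuclideanSpace ℝ (Fin n))
    (d : Fin p → EuclideanSpace ℝ (Fin k) → ℝ)
    (hd : ∀ j v, d j v = ⟪b j, L v⟫)
    (ρj : Fin p → EuclideanSpace ℝ (Fin k) → ℝ≥0∞)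
    (hρj : ∀ j v, ρj j v = if 0 < d j v then ENNReal.ofReal (-(c j) / d j v) else ⊤)
    (ρ : EuclideanSpace ℝ (Fin k) → ℝ≥0∞)
    (hρ : ∀ v, ρ v = ⨅ j, ρj j v)
    (hindep : ∀ i j : Fin p, i ≠ j →
      LinearIndependent ℝ ![LinearMap.adjoint L (b i), LinearMap.adjoint L (b j)]) :
    uniformSphereMeasure k
      {v : sphere (0 : EuclideanSpace ℝ (Fin k)) 1 |
        ρ (v : EuclideanSpace ℝ (Fin k)) ≠ ⊤ ∧
        ∃ i j : Fin p, i ≠ j ∧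
          ρ (v : EuclideanSpace ℝ (Fin k)) = ρj i (v : EuclideanSpace ℝ (Fin k)) ∧
          ρ (v : EuclideanSpace ℝ (Fin k)) = ρj j (v : EuclideanSpace ℝ (Fin k))} = 0 := by
  set w : Fin p → Fin p → EuclideanSpace ℝ (Fin k) := fun i j =>
    c i • LinearMap.adjoint L (b j) - c j • LinearMap.adjoint L (b i) with hw
  -- each w i j (i ≠ j) is nonzero
  have hwne : ∀ i j : Fin p, i ≠ j → w i j ≠ 0 := by
    intro i j hij h0
    have h1 : (-(c j)) • LinearMap.adjoint L (b i) + (c i) • LinearMap.adjoint L (b j) = 0 := by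
      rw [neg_smul, add_comm, ← sub_eq_add_neg]
      exact h0
    have := (LinearIndependent.pair_iff.mp (hindep i j hij)) _ _ h1
    have : -(c j) = 0 := this.1
    linarith [hc j]
  -- the bad set is contained in the union of hyperplane slices
  set T : Set (sphere (0 : EuclideanSpace ℝ (Fin k)) 1) := ⋃ i : Fin p, ⋃ j : Fin p, ⋃ _ : i ≠ j,
    {v : sphere (0 : EuclideanSpace ℝ (Fin k)) 1 |
      ⟪w i j, (v : EuclideanSpace ℝ (Fin k))⟫ = 0} with hT
  refine measure_mono_null (fun v hv => ?_) (?_ : uniformSphereMeasure k T = 0)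
  · obtain ⟨hfin, i, j, hij, hi, hj⟩ := hv
    refine Set.mem_iUnion.2 ⟨i, Set.mem_iUnion.2 ⟨j, Set.mem_iUnion.2 ⟨hij, ?_⟩⟩⟩
    have hij' : ρj i (v : EuclideanSpace ℝ (Fin k)) = ρj j (v : EuclideanSpace ℝ (Fin k)) :=
      hi ▸ hj
    have hfi : ρj i (v : EuclideanSpace ℝ (Fin k)) ≠ ⊤ := hi ▸ hfin
    have hfj : ρj j (v : EuclideanSpace ℝ (Fin k)) ≠ ⊤ := hj ▸ hfin
    have hdi : 0 < d i (v : EuclideanSpace ℝ (Fin k)) := by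
      by_contra h
      rw [hρj, if_neg h] at hfi; exact hfi rfl
    have hdj : 0 < d j (v : EuclideanSpace ℝ (Fin k)) := by
      by_contra h
      rw [hρj, if_neg h] at hfj; exact hfj rfl
    rw [hρj, if_pos hdi, hρj, if_pos hdj] at hij'
    have hnn_i : (0:ℝ) ≤ -(c i) / d i (v : EuclideanSpace ℝ (Fin k)) :=
      div_nonneg (by linarith [hc i]) hdi.le
    have hnn_j : (0:ℝ) ≤ -(c j) / d j (v : EuclideanSpace ℝ (Fin k)) :=
      div_nonneg (by linarith [hc j]) hdj.le
    have heq : -(c i) / d i (v : EuclideanSpace ℝ (Fin k))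
        = -(c j) / d j (v : EuclideanSpace ℝ (Fin k)) :=
      (ENNReal.ofReal_eq_ofReal_iff hnn_i hnn_j).mp hij'
    have hcross : -(c i) * d j (v : EuclideanSpace ℝ (Fin k))
        = -(c j) * d i (v : EuclideanSpace ℝ (Fin k)) :=
      (div_eq_div_iff hdi.ne' hdj.ne').mp heq
    have hinner : ∀ m : Fin p,
        ⟪LinearMap.adjoint L (b m), (v : EuclideanSpace ℝ (Fin k))⟫
          = d m (v : EuclideanSpace ℝ (Fin k)) := by
      intro m
      rw [LinearMap.adjoint_inner_left, ← hd]
    show ⟪w i j, (v : EuclideanSpace ℝ (Fin k))⟫ = 0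
    rw [hw]
    simp only [inner_sub_left, real_inner_smul_left, hinner]
    nlinarith [hcross]
  · refine measure_iUnion_null fun i => measure_iUnion_null fun j => ?_
    exact measure_iUnion_null fun hij => sphere_hyperplane_null (w i j) (hwne i j hij)
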